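/- Let R be a discrete valuation ring with maximal ideal (π), residue field F = R/(π), and fraction field K, and let G be a finite group with a representation G → GL_n(R). If both K[x_1,…,x_n]^G and F[x_1,…,x_n]^G are polynomial rings generated by homogeneous invariants of the same multiset of degrees, then R[x_1,…,x_n]^G is a polynomial ring over R. -/

import Mathlib

open MvPolynomial

/-- The linear-substitution action of an invertible matrix `M` on polynomials:
`(M • f)(a) = f (M⁻¹ • a)`, i.e. `X i ↦ ∑ j (M⁻¹) i j • X j`. -/
noncomputable def gAct {R : Type*} [CommRing R] {n : ℕ}
    (M : Matrix.GeneralLinearGroup (Fin n) R) :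
    MvPolynomial (Fin n) R →ₐ[R] MvPolynomial (Fin n) R :=
  aeval fun i => ∑ j, C ((M⁻¹ : Matrix.GeneralLinearGroup (Fin n) R) i j) * X j

/-- The ring of invariants `R[x_1,…,x_n]^G` of the representation `ρ : G →* GL_n(R)`. -/
noncomputable def invariantRing {R : Type*} [CommRing R] {n : ℕ} {G : Type*} [Group G]
    (ρ : G →* Matrix.GeneralLinearGroup (Fin n) R) : Subalgebra R (MvPolynomial (Fin n) R) :=
  ⨅ σ : G, AlgHom.equalizer (gAct (ρ σ)) (AlgHom.id R _)

/-- A regular local ring: Noetherian, local, and the Krull dimension equals the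
dimension of the cotangent space. -/
def IsRegularLocalRingP (A : Type*) [CommRing A] : Prop :=
  IsNoetherianRing A ∧ ∃ h : IsLocalRing A,
    haveI := h
    ringKrullDim A =
      Module.finrank (IsLocalRing.ResidueField A) (IsLocalRing.CotangentSpace A)

/-- A regular ring: Noetherian, and all localizations at primes are regular local rings. -/
def IsRegularRingP (A : Type*) [CommRing A] : Prop :=
  IsNoetherianRing A ∧ ∀ (p : Ideal A) (hp : p.IsPrime),
    haveI := hp
    IsRegularLocalRingP (Localization.AtPrime p)

open scoped TensorProduct in
/-- The tensor product `B_{I_1}R ⊗_R ⋯ ⊗_R B_{I_n}R` of the blowup (Rees) algebras of the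
ideals `I i`. -/
noncomputable def BlowupTensor (R : Type*) [CommRing R] {n : ℕ} (I : Fin n → Ideal R) : Type _ :=
  ⨂[R] i : Fin n, ↥(reesAlgebra (I i))

noncomputable instance (R : Type*) [CommRing R] {n : ℕ} (I : Fin n → Ideal R) :
    CommRing (BlowupTensor R I) := by unfold BlowupTensor; infer_instance

noncomputable instance (R : Type*) [CommRing R] {n : ℕ} (I : Fin n → Ideal R) :
    Algebra R (BlowupTensor R I) := by unfold BlowupTensor; infer_instance

/-- A pseudoreflection: a nonidentity invertible matrix fixing a hyperplane pointwise,
i.e. `g - 1` has rank at most one. -/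
def IsPseudoreflection {n : ℕ} {K : Type*} [Field K]
    (g : Matrix.GeneralLinearGroup (Fin n) K) : Prop :=
  g ≠ 1 ∧ Matrix.rank ((g : Matrix (Fin n) (Fin n) K) - 1) ≤ 1

/-!
Let `A_m` be the module of invariants of degree `m` over `R`. It is finite free over `R` and
saturated in `R[x]`: if `r • f ∈ A_m` with `r ≠ 0`, then `f ∈ A_m`. Clearing denominators,
`A_m` spans the degree-`m` invariants over `K`, so its rank is at least the number `N_m` of
monomials of weighted degree `m` in the common degrees. By saturation, a basis of `A_m` stays
independent modulo `π`. Since `N_m` is also the dimension of the degree-`m` invariants over `F`,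
reduction `A_m → F[x]^G_m` is onto. Lift the generators over `F` to invariants `g_i`. A relation
among the `g_i` reduces to one over `F`, so it is divisible by every power of `π` and vanishes by
Krull's intersection theorem. Every `A_m` lies in `R[g]` by Nakayama, because
`A_m ⊆ R[g] + π A_m`.
-/

namespace MvPolynomial

variable {σ τ R S : Type*} [CommSemiring R] [CommSemiring S]

theorem IsWeightedHomogeneous.aeval_isHomogeneous [Algebra R S] {w : σ → ℕ} {m : ℕ}
    {p : MvPolynomial σ R} (hp : p.IsWeightedHomogeneous w m) {f : σ → MvPolynomial τ S}
    (hf : ∀ i, (f i).IsHomogeneous (w i)) : (aeval f p).IsHomogeneous m := by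
  apply IsHomogeneous.sum
  intro μ hμ
  rw [← zero_add m]
  refine IsHomogeneous.mul (isHomogeneous_C _ _) ?_
  rw [← hp (mem_support_iff.1 hμ), Finsupp.weight_apply, Finsupp.sum]
  exact IsHomogeneous.prod _ _ _ fun i _ => by simpa [mul_comm] using (hf i).pow (μ i)

theorem homogeneousComponent_apply_weightedHomogeneousComponent (w : σ → ℕ)
    (φ : MvPolynomial σ R →+ MvPolynomial τ S)
    (hφ : ∀ m p, p.IsWeightedHomogeneous w m → (φ p).IsHomogeneous m) (m : ℕ)
    (p : MvPolynomial σ R) :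
    homogeneousComponent m (φ p) = φ (weightedHomogeneousComponent w m p) := by
  induction p using MvPolynomial.induction_on' with
  | monomial μ c =>
    have hμ := isWeightedHomogeneous_monomial w μ c rfl
    rw [homogeneousComponent_of_mem (hφ _ _ hμ), weightedHomogeneousComponent_of_mem hμ]
    split_ifs <;> simp
  | add p q hp hq => simp only [map_add, hp, hq]

theorem homogeneousComponent_aeval [Algebra R S] {f : σ → MvPolynomial τ S} {d : σ → ℕ}
    (hf : ∀ i, (f i).IsHomogeneous (d i)) (m : ℕ) (p : MvPolynomial σ R) :
    homogeneousComponent m (aeval f p) = aeval f (weightedHomogeneousComponent d m p) :=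
  homogeneousComponent_apply_weightedHomogeneousComponent d (aeval f).toAddMonoidHom
    (fun _ _ hp => hp.aeval_isHomogeneous hf) m p

theorem homogeneousComponent_map (φ : R →+* S) (m : ℕ) (p : MvPolynomial σ R) :
    homogeneousComponent m (map φ p) = map φ (homogeneousComponent m p) :=
  homogeneousComponent_apply_weightedHomogeneousComponent 1 (map φ).toAddMonoidHom
    (fun _ _ hp => IsHomogeneous.map hp φ) m p

theorem map_smul_eq_smul_map (φ : R →+* S) (r : R) (p : MvPolynomial σ R) :
    map φ (r • p) = φ r • map φ p := by
  rw [smul_eq_C_mul, smul_eq_C_mul, map_mul, map_C]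

theorem map_aeval_eq_aeval_map (φ : R →+* S) (f : σ → MvPolynomial τ R)
    (p : MvPolynomial σ R) :
    map φ (aeval f p) = aeval (fun i => map φ (f i)) (map φ p) := by
  rw [aeval_def, aeval_def, algebraMap_eq, algebraMap_eq, map_eval₂, eval₂_map, eval₂_map]
  rfl

theorem adjoin_inf_homogeneousSubmodule_eq_span {ι : Type*} {f : ι → MvPolynomial σ R}
    {d : ι → ℕ} (hf : ∀ i, (f i).IsHomogeneous (d i)) (m : ℕ) :
    Subalgebra.toSubmodule (Algebra.adjoin R (Set.range f)) ⊓ homogeneousSubmodule σ R m =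
      Submodule.span R
        (Set.range fun μ : {μ : ι →₀ ℕ // Finsupp.weight d μ = m} =>
          aeval f (monomial μ.1 (1 : R))) := by
  rw [Algebra.adjoin_range_eq_range_aeval]
  apply le_antisymm
  · rintro _ ⟨⟨q, rfl⟩, hq⟩
    change (aeval f q).IsHomogeneous m at hq
    change aeval f q ∈ _
    rw [← homogeneousComponent_eq_self hq, homogeneousComponent_aeval hf,
      (weightedHomogeneousComponent d m q).as_sum, map_sum]
    refine Submodule.sum_mem _ fun μ hμ => ?_
    have hwμ : Finsupp.weight d μ = m :=
      weightedHomogeneousComponent_isWeightedHomogeneous m q (mem_support_iff.1 hμ)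
    rw [← mul_one (coeff μ _), ← smul_eq_mul, ← smul_monomial, map_smul]
    exact Submodule.smul_mem _ _ (Submodule.subset_span ⟨⟨μ, hwμ⟩, rfl⟩)
  · rw [Submodule.span_le]
    rintro _ ⟨μ, rfl⟩
    exact ⟨AlgHom.mem_range_self _ _,
      (isWeightedHomogeneous_monomial d μ.1 1 μ.2).aeval_isHomogeneous hf⟩

-- Both sides are `0` when infinitely many exponents have weight `m`.
theorem finrank_adjoin_inf_homogeneousSubmodule {k : Type*} [Field k] {ι : Type*}
    {f : ι → MvPolynomial σ k} (hf : AlgebraicIndependent k f) {d : ι → ℕ}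
    (hd : ∀ i, (f i).IsHomogeneous (d i)) (m : ℕ) :
    Module.finrank k ↥(Subalgebra.toSubmodule (Algebra.adjoin k (Set.range f)) ⊓
      homogeneousSubmodule σ k m) = Nat.card {μ : ι →₀ ℕ // Finsupp.weight d μ = m} := by
  have hli : LinearIndependent k fun μ : {μ : ι →₀ ℕ // Finsupp.weight d μ = m} =>
      aeval f (monomial μ.1 (1 : k)) := by
    have := ((basisMonomials ι k).linearIndependent.map' (aeval f).toLinearMap
      (LinearMap.ker_eq_bot.2 hf)).comp
        (Subtype.val : {μ : ι →₀ ℕ // Finsupp.weight d μ = m} → _) Subtype.val_injective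
    simpa [Function.comp_def] using this
  rw [adjoin_inf_homogeneousSubmodule_eq_span hd, Module.finrank, rank_span hli,
    ← Cardinal.toNat_lift, Cardinal.mk_range_eq_of_injective hli.injective, Cardinal.toNat_lift]
  rfl

end MvPolynomial

theorem MvPolynomial.exists_map_algebraMap_eq_smul {σ R S : Type*} [CommRing R] [CommRing S]
    [Algebra R S] (M : Submonoid R) [IsLocalization M S] (p : MvPolynomial σ S) :
    ∃ s ∈ M, ∃ q : MvPolynomial σ R, map (algebraMap R S) q = (s : R) • p := by
  obtain ⟨s, hs⟩ := IsLocalization.exist_integer_multiples M p.support (coeff · p)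
  refine ⟨s, s.2, mem_range_map_iff_coeffs_subset.2 fun c hc => ?_⟩
  obtain ⟨μ, hμ, rfl⟩ := mem_coeffs_iff.1 hc
  rw [coeff_smul]
  exact hs μ (support_smul hμ)

section Invariants

variable {R S : Type*} [CommRing R] [CommRing S] {n : ℕ} {G : Type*} [Group G]

theorem mem_invariantRing_iff (ρ : G →* Matrix.GeneralLinearGroup (Fin n) R)
    {f : MvPolynomial (Fin n) R} : f ∈ invariantRing ρ ↔ ∀ σ, gAct (ρ σ) f = f := by
  simp [invariantRing, Algebra.mem_iInf, AlgHom.mem_equalizer]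

theorem homogeneousComponent_gAct (M : Matrix.GeneralLinearGroup (Fin n) R) (m : ℕ)
    (f : MvPolynomial (Fin n) R) :
    homogeneousComponent m (gAct M f) = gAct M (homogeneousComponent m f) :=
  homogeneousComponent_aeval (d := 1)
    (fun _ => IsHomogeneous.sum _ _ _ fun _ _ => isHomogeneous_C_mul_X _ _) m f

theorem homogeneousComponent_mem_invariantRing (ρ : G →* Matrix.GeneralLinearGroup (Fin n) R)
    {f : MvPolynomial (Fin n) R} (hf : f ∈ invariantRing ρ) (m : ℕ) :
    homogeneousComponent m f ∈ invariantRing ρ := by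
  rw [mem_invariantRing_iff] at hf ⊢
  intro σ
  rw [← homogeneousComponent_gAct, hf]

theorem map_gAct (φ : R →+* S) (M : Matrix.GeneralLinearGroup (Fin n) R)
    (f : MvPolynomial (Fin n) R) :
    map φ (gAct M f) = gAct (Matrix.GeneralLinearGroup.map φ M) (map φ f) := by
  simp only [gAct, map_aeval_eq_aeval_map, map_sum, map_mul, map_C, map_X, ← map_inv,
    Matrix.GeneralLinearGroup.map_apply]

theorem map_mem_invariantRing (φ : R →+* S) (ρ : G →* Matrix.GeneralLinearGroup (Fin n) R)
    {f : MvPolynomial (Fin n) R} (hf : f ∈ invariantRing ρ) :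
    map φ f ∈ invariantRing ((Matrix.GeneralLinearGroup.map φ).comp ρ) := by
  rw [mem_invariantRing_iff] at hf ⊢
  intro σ
  rw [MonoidHom.comp_apply, ← map_gAct, hf]

theorem mem_invariantRing_of_map {φ : R →+* S} (hφ : Function.Injective φ)
    (ρ : G →* Matrix.GeneralLinearGroup (Fin n) R) {f : MvPolynomial (Fin n) R}
    (hf : map φ f ∈ invariantRing ((Matrix.GeneralLinearGroup.map φ).comp ρ)) :
    f ∈ invariantRing ρ := by
  rw [mem_invariantRing_iff] at hf ⊢
  intro σ
  apply map_injective φ hφ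
  rw [map_gAct, ← MonoidHom.comp_apply, hf]

variable (ρ : G →* Matrix.GeneralLinearGroup (Fin n) R)

noncomputable def homogeneousInvariants (m : ℕ) : Submodule R (MvPolynomial (Fin n) R) :=
  Subalgebra.toSubmodule (invariantRing ρ) ⊓ homogeneousSubmodule (Fin n) R m

instance [IsNoetherianRing R] (m : ℕ) : Module.Finite R (homogeneousInvariants ρ m) :=
  Module.Finite.iff_fg.2 ((homogeneousSubmodule_fg _ _ m).of_le inf_le_right)

theorem map_mem_homogeneousInvariants (φ : R →+* S) {m : ℕ} {f : MvPolynomial (Fin n) R}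
    (hf : f ∈ homogeneousInvariants ρ m) :
    map φ f ∈ homogeneousInvariants ((Matrix.GeneralLinearGroup.map φ).comp ρ) m :=
  ⟨map_mem_invariantRing φ ρ hf.1, hf.2.map φ⟩

theorem mem_homogeneousInvariants_of_map {φ : R →+* S} (hφ : Function.Injective φ) {m : ℕ}
    {f : MvPolynomial (Fin n) R}
    (hf : map φ f ∈ homogeneousInvariants ((Matrix.GeneralLinearGroup.map φ).comp ρ) m) :
    f ∈ homogeneousInvariants ρ m :=
  ⟨mem_invariantRing_of_map hφ ρ hf.1, hf.2.of_map hφ⟩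

theorem mem_homogeneousInvariants_of_smul_mem [IsDomain R] {m : ℕ} {r : R} (hr : r ≠ 0)
    {f : MvPolynomial (Fin n) R} (hf : r • f ∈ homogeneousInvariants ρ m) :
    f ∈ homogeneousInvariants ρ m := by
  refine ⟨(mem_invariantRing_iff ρ).2 fun σ => smul_right_injective _ hr ?_, fun μ hμ => ?_⟩
  · simp only [← map_smul, (mem_invariantRing_iff ρ).1 hf.1 σ]
  · exact hf.2 (by rwa [coeff_smul, smul_eq_mul, mul_ne_zero_iff_left hr])

theorem invariantRing_le_of_homogeneousInvariants_le {A : Subalgebra R (MvPolynomial (Fin n) R)}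
    (h : ∀ m, homogeneousInvariants ρ m ≤ Subalgebra.toSubmodule A) :
    invariantRing ρ ≤ A := by
  intro f hf
  rw [← sum_homogeneousComponent f]
  exact Subalgebra.sum_mem _ fun m _ =>
    h m ⟨homogeneousComponent_mem_invariantRing ρ hf m, homogeneousComponent_isHomogeneous m f⟩

end Invariants

section DiscreteValuationRing

open IsLocalRing

variable {R : Type*} [CommRing R] [IsDomain R] [IsDiscreteValuationRing R] {σ : Type*}

theorem exists_eq_smul_of_map_residue_eq_zero {π : R} (hπ : Irreducible π)
    {p : MvPolynomial σ R} (hp : map (residue R) p = 0) : ∃ q, p = π • q := by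
  have hres (r : R) : residue R r = 0 ↔ π ∣ r := by
    rw [residue_eq_zero_iff, hπ.maximalIdeal_eq, Ideal.mem_span_singleton]
  obtain ⟨q, rfl⟩ := (C_dvd_iff_map_hom_eq_zero _ π hres p).2 hp
  exact ⟨q, (smul_eq_C_mul q π).symm⟩

theorem algebraicIndependent_of_map_residue {ι : Type*} {g : ι → MvPolynomial σ R}
    (hg : AlgebraicIndependent (ResidueField R) fun i => map (residue R) (g i)) :
    AlgebraicIndependent R g := by
  obtain ⟨π, hπ⟩ := IsDiscreteValuationRing.exists_irreducible R
  have hcoeff (k : ℕ) : ∀ P : MvPolynomial ι R, aeval g P = 0 →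
      ∀ μ, coeff μ P ∈ maximalIdeal R ^ k := by
    induction k with
    | zero => simp
    | succ k ih =>
      intro P hP μ
      obtain ⟨Q, rfl⟩ := exists_eq_smul_of_map_residue_eq_zero hπ
        (hg.eq_zero_of_aeval_eq_zero _ (by rw [← map_aeval_eq_aeval_map, hP, map_zero]))
      rw [map_smul, smul_eq_zero_iff_right hπ.ne_zero] at hP
      rw [coeff_smul, smul_eq_mul, pow_succ']
      exact Ideal.mul_mem_mul ((mem_maximalIdeal π).2 hπ.not_isUnit) (ih Q hP μ)
  refine algebraicIndependent_iff.2 fun P hP => MvPolynomial.ext _ _ fun μ => ?_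
  have : coeff μ P ∈ ⨅ k, maximalIdeal R ^ k := Ideal.mem_iInf.2 fun k => hcoeff k P hP μ
  rwa [Ideal.iInf_pow_eq_bot_of_isLocalRing _ (maximalIdeal.isMaximal R).ne_top,
    Ideal.mem_bot] at this

theorem linearIndependent_map_residue_basis {M : Submodule R (MvPolynomial σ R)}
    (hM : ∀ {r : R} {x}, r ≠ 0 → r • x ∈ M → x ∈ M) {ι : Type*} [Fintype ι]
    (b : Module.Basis ι R M) :
    LinearIndependent (ResidueField R) fun i => map (residue R) (b i : MvPolynomial σ R) := by
  obtain ⟨π, hπ⟩ := IsDiscreteValuationRing.exists_irreducible R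
  rw [Fintype.linearIndependent_iff]
  intro g hg i
  choose t ht using fun i => residue_surjective (g i)
  set x : M := ∑ i, t i • b i
  have hx : map (residue R) (x : MvPolynomial σ R) = 0 := by
    simpa [x, map_smul_eq_smul_map, ht] using hg
  obtain ⟨y, hy⟩ := exists_eq_smul_of_map_residue_eq_zero hπ hx
  have hxy : x = π • ⟨y, hM hπ.ne_zero (hy ▸ x.2)⟩ := Subtype.ext hy
  have hti := congrArg (fun z => b.repr z i) hxy
  simp only [x, b.repr_sum_self, map_smul, Finsupp.smul_apply, smul_eq_mul] at hti
  rw [← ht i, hti, map_mul, (residue_eq_zero_iff π).2 ((mem_maximalIdeal π).2 hπ.not_isUnit),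
    zero_mul]

end DiscreteValuationRing

section Reduction

variable {R : Type*} [CommRing R] [IsDomain R] {n : ℕ} {G : Type*} [Group G]
  (ρ : G →* Matrix.GeneralLinearGroup (Fin n) R)

theorem finrank_homogeneousInvariants_fractionRing_le [IsPrincipalIdealRing R] (K : Type*)
    [Field K] [Algebra R K] [IsFractionRing R K] (m : ℕ) :
    Module.finrank K
        (homogeneousInvariants ((Matrix.GeneralLinearGroup.map (algebraMap R K)).comp ρ) m) ≤
      Module.finrank R (homogeneousInvariants ρ m) := by
  set κ := algebraMap R K
  let b := Module.Free.chooseBasis R (homogeneousInvariants ρ m)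
  set V := Submodule.span K (Set.range fun i => map κ (b i : MvPolynomial (Fin n) R))
  have hbV (x : homogeneousInvariants ρ m) : map κ (x : MvPolynomial (Fin n) R) ∈ V := by
    rw [← b.sum_repr x, Submodule.coe_sum, map_sum]
    exact Submodule.sum_mem _ fun i _ => by
      rw [Submodule.coe_smul, map_smul_eq_smul_map]
      exact Submodule.smul_mem _ _ (Submodule.subset_span ⟨i, rfl⟩)
  have hle : homogeneousInvariants ((Matrix.GeneralLinearGroup.map κ).comp ρ) m ≤ V := by
    intro p hp
    obtain ⟨s, hs, q, hq⟩ := exists_map_algebraMap_eq_smul (nonZeroDivisors R) p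
    rw [← algebraMap_smul K] at hq
    have hqA : q ∈ homogeneousInvariants ρ m :=
      mem_homogeneousInvariants_of_map ρ (IsFractionRing.injective R K)
        (hq ▸ Submodule.smul_mem _ _ hp)
    have hs0 : κ s ≠ 0 := IsFractionRing.to_map_ne_zero_of_mem_nonZeroDivisors hs
    rw [← inv_smul_smul₀ hs0 p, ← hq]
    exact Submodule.smul_mem _ _ (hbV ⟨q, hqA⟩)
  have : Module.Finite K V := Module.Finite.span_of_finite K (Set.finite_range _)
  calc _ ≤ Module.finrank K V := Submodule.finrank_mono hle
    _ ≤ Fintype.card (Module.Free.ChooseBasisIndex R (homogeneousInvariants ρ m)) :=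
        finrank_range_le_card _
    _ = _ := (Module.finrank_eq_card_chooseBasisIndex _ _).symm

open IsLocalRing

variable [IsDiscreteValuationRing R]

theorem exists_map_residue_eq_of_finrank_le (K : Type*) [Field K] [Algebra R K]
    [IsFractionRing R K] {m : ℕ}
    (hdim : Module.finrank (ResidueField R)
        (homogeneousInvariants ((Matrix.GeneralLinearGroup.map (residue R)).comp ρ) m) ≤
      Module.finrank K
        (homogeneousInvariants ((Matrix.GeneralLinearGroup.map (algebraMap R K)).comp ρ) m))
    {p : MvPolynomial (Fin n) (ResidueField R)}
    (hp : p ∈ homogeneousInvariants ((Matrix.GeneralLinearGroup.map (residue R)).comp ρ) m) :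
    ∃ a ∈ homogeneousInvariants ρ m, map (residue R) a = p := by
  let b := Module.Free.chooseBasis R (homogeneousInvariants ρ m)
  set v := fun i => map (residue R) (b i : MvPolynomial (Fin n) R)
  have hv : LinearIndependent (ResidueField R) v :=
    linearIndependent_map_residue_basis
      (fun hr hx => mem_homogeneousInvariants_of_smul_mem ρ hr hx) b
  have hle : Submodule.span (ResidueField R) (Set.range v) ≤
      homogeneousInvariants ((Matrix.GeneralLinearGroup.map (residue R)).comp ρ) m :=
    Submodule.span_le.2 <| Set.range_subset_iff.2 fun i =>
      map_mem_homogeneousInvariants ρ _ (b i).2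
  have hspan := Submodule.eq_of_le_of_finrank_le hle (by
    rw [finrank_span_eq_card hv, ← Module.finrank_eq_card_chooseBasisIndex]
    exact hdim.trans (finrank_homogeneousInvariants_fractionRing_le ρ K m))
  obtain ⟨c, rfl⟩ := (Submodule.mem_span_range_iff_exists_fun _).1 (hspan ▸ hp)
  choose t ht using fun i => residue_surjective (c i)
  refine ⟨∑ i, t i • (b i : MvPolynomial (Fin n) R),
    Submodule.sum_mem _ fun i _ => Submodule.smul_mem _ _ (b i).2, ?_⟩
  simp [map_sum, map_smul_eq_smul_map, ht, v]

theorem homogeneousInvariants_le_adjoin {ι : Type*} {g : ι → MvPolynomial (Fin n) R}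
    {d : ι → ℕ} (hg : ∀ i, g i ∈ invariantRing ρ) (hgd : ∀ i, (g i).IsHomogeneous (d i))
    (hgF : invariantRing ((Matrix.GeneralLinearGroup.map (residue R)).comp ρ) ≤
      Algebra.adjoin (ResidueField R) (Set.range fun i => map (residue R) (g i)))
    (m : ℕ) :
    homogeneousInvariants ρ m ≤ Subalgebra.toSubmodule (Algebra.adjoin R (Set.range g)) := by
  obtain ⟨π, hπ⟩ := IsDiscreteValuationRing.exists_irreducible R
  refine Submodule.le_of_le_smul_of_le_jacobson_bot (I := maximalIdeal R)
    (Module.Finite.iff_fg.1 inferInstance) (jacobson_eq_maximalIdeal ⊥ bot_ne_top).ge ?_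
  intro a ha
  obtain ⟨q, hq⟩ : map (residue R) a ∈
      (aeval (R := ResidueField R) fun i => map (residue R) (g i)).range := by
    rw [aeval_range]
    exact hgF (map_mem_invariantRing _ ρ ha.1)
  obtain ⟨Q, rfl⟩ := map_surjective _ residue_surjective q
  replace hq : aeval (fun i => map (residue R) (g i)) (map (residue R) Q) = map (residue R) a :=
    hq
  set y := homogeneousComponent m (aeval g Q) with hy_def
  have hyB : y ∈ Algebra.adjoin R (Set.range g) := by
    rw [hy_def, homogeneousComponent_aeval hgd, ← aeval_range]
    exact AlgHom.mem_range_self _ _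
  have hy : y ∈ homogeneousInvariants ρ m :=
    ⟨Algebra.adjoin_le (Set.range_subset_iff.2 hg) hyB, homogeneousComponent_isHomogeneous _ _⟩
  have hya : map (residue R) (a - y) = 0 := by
    rw [map_sub, ← homogeneousComponent_map, map_aeval_eq_aeval_map, hq,
      homogeneousComponent_eq_self (ha.2.map _), sub_self]
  obtain ⟨z, hz⟩ := exists_eq_smul_of_map_residue_eq_zero hπ hya
  have hzA : z ∈ homogeneousInvariants ρ m :=
    mem_homogeneousInvariants_of_smul_mem ρ hπ.ne_zero (hz ▸ Submodule.sub_mem _ ha hy)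
  rw [← sub_add_cancel a y, hz]
  exact Submodule.add_mem _ (Submodule.mem_sup_right (Submodule.smul_mem_smul
    ((mem_maximalIdeal π).2 hπ.not_isUnit) hzA)) (Submodule.mem_sup_left hyB)

end Reduction

theorem stmt13_general {R : Type*} [CommRing R] [IsDomain R] [IsDiscreteValuationRing R] {n : ℕ}
    {G : Type*} [Group G]
    (ρ : G →* Matrix.GeneralLinearGroup (Fin n) R)
    (hsame : ∃ d : Fin n → ℕ,
      (∃ fK : Fin n → MvPolynomial (Fin n) (FractionRing R),
        (∀ i, fK i ∈ invariantRing
          ((Matrix.GeneralLinearGroup.map (algebraMap R (FractionRing R))).comp ρ)) ∧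
        (∀ i, (fK i).IsHomogeneous (d i)) ∧
        AlgebraicIndependent (FractionRing R) fK ∧
        Algebra.adjoin (FractionRing R) (Set.range fK) =
          invariantRing
            ((Matrix.GeneralLinearGroup.map (algebraMap R (FractionRing R))).comp ρ)) ∧
      (∃ fF : Fin n → MvPolynomial (Fin n) (IsLocalRing.ResidueField R),
        (∀ i, fF i ∈ invariantRing
          ((Matrix.GeneralLinearGroup.map (IsLocalRing.residue R)).comp ρ)) ∧
        (∀ i, (fF i).IsHomogeneous (d i)) ∧
        AlgebraicIndependent (IsLocalRing.ResidueField R) fF ∧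
        Algebra.adjoin (IsLocalRing.ResidueField R) (Set.range fF) =
          invariantRing
            ((Matrix.GeneralLinearGroup.map (IsLocalRing.residue R)).comp ρ))) :
    ∃ (e : Fin n → ℕ) (g : Fin n → MvPolynomial (Fin n) R),
      (∀ i, g i ∈ invariantRing ρ) ∧ (∀ i, (g i).IsHomogeneous (e i)) ∧
      AlgebraicIndependent R g ∧
      Algebra.adjoin R (Set.range g) = invariantRing ρ := by
  obtain ⟨d, ⟨fK, -, hKd, hKind, hKadj⟩, ⟨fF, -, hFd, hFind, hFadj⟩⟩ := hsame
  have hdim (m : ℕ) :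
      Module.finrank (IsLocalRing.ResidueField R)
          (homogeneousInvariants
            ((Matrix.GeneralLinearGroup.map (IsLocalRing.residue R)).comp ρ) m) ≤
        Module.finrank (FractionRing R) (homogeneousInvariants
          ((Matrix.GeneralLinearGroup.map (algebraMap R (FractionRing R))).comp ρ) m) := by
    rw [homogeneousInvariants, homogeneousInvariants, ← hKadj, ← hFadj,
      finrank_adjoin_inf_homogeneousSubmodule hKind hKd,
      finrank_adjoin_inf_homogeneousSubmodule hFind hFd]
  have hlift (i : Fin n) :
      ∃ a ∈ homogeneousInvariants ρ (d i), map (IsLocalRing.residue R) a = fF i :=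
    exists_map_residue_eq_of_finrank_le ρ (FractionRing R) (hdim (d i))
      ⟨hFadj ▸ Algebra.subset_adjoin (Set.mem_range_self i), hFd i⟩
  choose g hg hgF using hlift
  replace hgF : (fun i => map (IsLocalRing.residue R) (g i)) = fF := funext hgF
  refine ⟨d, g, fun i => (hg i).1, fun i => (hg i).2,
    algebraicIndependent_of_map_residue (hgF ▸ hFind),
    le_antisymm (Algebra.adjoin_le (Set.range_subset_iff.2 fun i => (hg i).1)) ?_⟩
  exact invariantRing_le_of_homogeneousInvariants_le ρ
    (homogeneousInvariants_le_adjoin ρ (fun i => (hg i).1) (fun i => (hg i).2) (hgF ▸ hFadj.ge))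

/-- If the invariant rings over the fraction field and over the residue field of a DVR are
polynomial rings with generators of the same degrees, then the invariant ring over the DVR
is a polynomial ring. -/
theorem stmt13 {R : Type*} [CommRing R] [IsDomain R] [IsDiscreteValuationRing R] {n : ℕ}
    {G : Type*} [Group G] [Finite G]
    (ρ : G →* Matrix.GeneralLinearGroup (Fin n) R)
    (hsame : ∃ d : Fin n → ℕ,
      (∃ fK : Fin n → MvPolynomial (Fin n) (FractionRing R),
        (∀ i, fK i ∈ invariantRing
          ((Matrix.GeneralLinearGroup.map (algebraMap R (FractionRing R))).comp ρ)) ∧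
        (∀ i, (fK i).IsHomogeneous (d i)) ∧
        AlgebraicIndependent (FractionRing R) fK ∧
        Algebra.adjoin (FractionRing R) (Set.range fK) =
          invariantRing
            ((Matrix.GeneralLinearGroup.map (algebraMap R (FractionRing R))).comp ρ)) ∧
      (∃ fF : Fin n → MvPolynomial (Fin n) (IsLocalRing.ResidueField R),
        (∀ i, fF i ∈ invariantRing
          ((Matrix.GeneralLinearGroup.map (IsLocalRing.residue R)).comp ρ)) ∧
        (∀ i, (fF i).IsHomogeneous (d i)) ∧
        AlgebraicIndependent (IsLocalRing.ResidueField R) fF ∧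
        Algebra.adjoin (IsLocalRing.ResidueField R) (Set.range fF) =
          invariantRing
            ((Matrix.GeneralLinearGroup.map (IsLocalRing.residue R)).comp ρ))) :
    ∃ (e : Fin n → ℕ) (g : Fin n → MvPolynomial (Fin n) R),
      (∀ i, g i ∈ invariantRing ρ) ∧ (∀ i, (g i).IsHomogeneous (e i)) ∧
      AlgebraicIndependent R g ∧
      Algebra.adjoin R (Set.range g) = invariantRing ρ :=
  stmt13_general ρ hsame
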